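/- Define polynomials \(c_n(\lambda)\) by \(c_0(\lambda) = 1\) and the recurrence \(c_n(\lambda) = (3 - \lambda) c_{n-1}(\lambda) - \sum_{i=2}^{n} (-1)^i (2^{i+1} - 1) c_{n-i}(\lambda)\). Then \(c_n(\lambda) = \sum_{t=0}^{n} \left( \sum_{\ell=0}^{t} \binom{t}{\ell} (-1)^t 2^{t-\ell} 3^{n+2\ell-3t-2} \left[ 2\binom{\ell}{n+2\ell-3t-2} + 9\binom{\ell+1}{n+2\ell-3t} \right] \right) \lambda^t\). -/

import Mathlib

/-!
Since `∑ (-1)^i (2^(i+1) - 1) x^i = 1 / ((1 + x)(1 + 2x))`, the recurrence says that the generating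
function `C(x) = ∑ c_n x^n` satisfies `C(x) (1 + λ x P(x)) = P(x)` with `P(x) = 1 + 3x + 2x²`.
Expanding the geometric series, `c_n = ∑_t (-λ)^t [x^n] x^t P(x)^(t+1)`; writing
`P(x)^t = ((1 + 3x) + 2x²)^t` binomially and `(1 + 3x)^l P(x) = (1 + 3x)^(l+1) + 2x² (1 + 3x)^l`
gives the double sum.
-/

/-- Binomial coefficient with integer arguments, defined to be 0 when the
lower index is negative or exceeds the upper index. -/
def binomZ (a b : ℤ) : ℚ :=
  if 0 ≤ b ∧ b ≤ a then (a.toNat.choose b.toNat : ℚ) else 0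

open PowerSeries

namespace PowerSeries

variable {R : Type*} [CommRing R]

theorem coeff_eq_coeff_mul_geom_sum_of_mul_one_add_X_mul_eq {f p q : R⟦X⟧}
    (h : f * (1 + X * q) = p) {n N : ℕ} (hn : n < N) :
    coeff n f = coeff n (p * ∑ t ∈ Finset.range N, (-(X * q)) ^ t) := by
  set S := ∑ t ∈ Finset.range N, (-(X * q)) ^ t
  have hunit : IsUnit (1 + X * q) := by simp [isUnit_iff_constantCoeff]
  have hdvd : X ^ N ∣ (f - p * S) * (1 + X * q) :=
    ⟨(-q) ^ N * p, by linear_combination h - p * geom_sum_mul_neg (-(X * q)) N⟩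
  rw [← sub_eq_zero, ← map_sub]
  exact X_pow_dvd_iff.mp (hunit.dvd_mul_right.mp hdvd) n hn

theorem coeff_one_add_C_mul_X_pow (a : R) (m j : ℕ) :
    coeff j ((1 + C a * X) ^ m) = a ^ j * m.choose j := by
  have hterm (i : ℕ) : (C a * X) ^ i * 1 ^ (m - i) * (m.choose i : R⟦X⟧) =
      C (a ^ i * m.choose i) * X ^ i := by
    simp only [one_pow, mul_one, mul_pow, map_mul, map_pow, map_natCast]; ring
  simp only [add_comm (1 : R⟦X⟧), add_pow, hterm, map_sum, coeff_C_mul_X_pow, Finset.sum_ite_eq,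
    Finset.mem_range]
  split_ifs with h
  · rfl
  · rw [Nat.choose_eq_zero_of_lt (by omega)]; simp

end PowerSeries

section GeneratingFunction

variable {R : Type*} [CommRing R]

theorem one_add_three_X_add_two_X_sq_mul_mk :
    (1 + C 3 * X + C 2 * X ^ 2 : R⟦X⟧) * mk (fun i => (-1 : R) ^ i * (2 ^ (i + 1) - 1)) = 1 := by
  ext (_ | _ | n) <;> simp [add_mul, mul_assoc, coeff_one, pow_succ] <;> ring

variable {lam : R} {c : ℕ → R} (h0 : c 0 = 1)
  (hrec : ∀ n, 1 ≤ n → c n = (3 - lam) * c (n - 1) -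
    ∑ i ∈ Finset.Icc 2 n, (-1 : R) ^ i * (2 ^ (i + 1) - 1) * c (n - i))
include h0 hrec

theorem mk_mul_mk_eq_one_sub_C_mul_X_mul :
    mk (fun i => (-1 : R) ^ i * (2 ^ (i + 1) - 1)) * mk c = 1 - C lam * X * mk c := by
  ext (_ | n)
  · simp [h0]; norm_num
  · rw [coeff_mul, Finset.Nat.sum_antidiagonal_eq_sum_range_succ
        (fun i j => coeff i (mk _) * coeff j (mk c)),
      ← Finset.sum_range_add_sum_Ico _ (by omega : 2 ≤ n + 1 + 1), Finset.Ico_add_one_right_eq_Icc]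
    simp only [Finset.sum_range_succ, Finset.sum_range_zero, coeff_mk, mul_assoc (C lam), map_sub,
      coeff_one, coeff_C_mul, coeff_succ_X_mul, Nat.add_one_ne_zero, if_false, Nat.sub_zero,
      Nat.add_sub_cancel]
    have h := hrec (n + 1) (by omega)
    rw [Nat.add_sub_cancel] at h
    linear_combination h

theorem mk_mul_one_add_X_mul_eq :
    mk c * (1 + X * (C lam * (1 + C 3 * X + C 2 * X ^ 2))) = 1 + C 3 * X + C 2 * X ^ 2 := by
  linear_combination (1 + C 3 * X + C 2 * X ^ 2) * mk_mul_mk_eq_one_sub_C_mul_X_mul h0 hrec -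
    mk c * one_add_three_X_add_two_X_sq_mul_mk (R := R)

end GeneratingFunction

theorem binomZ_natCast (a b : ℕ) : binomZ a b = a.choose b := by
  unfold binomZ
  split_ifs with h
  · simp
  · rw [Nat.choose_eq_zero_of_lt (by omega), Nat.cast_zero]

theorem zpow_mul_binomZ (a : ℚ) (m : ℕ) (k : ℤ) :
    a ^ k * binomZ m k = if 0 ≤ k then coeff k.toNat ((1 + C a * X) ^ m) else 0 := by
  split_ifs with hk
  · lift k to ℕ using hk
    rw [zpow_natCast, binomZ_natCast, Int.toNat_natCast, coeff_one_add_C_mul_X_pow]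
  · rw [binomZ, if_neg (by omega), mul_zero]

theorem coeff_one_add_three_X_pow_mul (l : ℕ) (k : ℤ) :
    (if 0 ≤ k then coeff k.toNat ((1 + C 3 * X) ^ l * (1 + C 3 * X + C 2 * X ^ 2)) else 0) =
      (3 : ℚ) ^ (k - 2) * (2 * binomZ l (k - 2) + 9 * binomZ ((l : ℤ) + 1) k) := by
  have h9 : (3 : ℚ) ^ (k - 2) * 9 = 3 ^ k := by
    rw [zpow_sub₀ (by norm_num)]; norm_num
  have hsplit : (1 + C 3 * X) ^ l * (1 + C 3 * X + C 2 * X ^ 2) =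
      (1 + C (3 : ℚ) * X) ^ (l + 1) + X ^ 2 * (C 2 * (1 + C 3 * X) ^ l) := by ring
  calc _ = 2 * (if 0 ≤ k - 2 then coeff (k - 2).toNat ((1 + C (3 : ℚ) * X) ^ l) else 0) +
        (if 0 ≤ k then coeff k.toNat ((1 + C (3 : ℚ) * X) ^ (l + 1)) else 0) := by
        rw [hsplit]
        split_ifs
        · rw [map_add, coeff_X_pow_mul', coeff_C_mul, if_pos (by omega),
            show (k - 2).toNat = k.toNat - 2 by omega]
          ring
        · rw [map_add, coeff_X_pow_mul', if_neg (by omega)]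
          ring
        · omega
        · ring
    _ = _ := by
      rw [← zpow_mul_binomZ, ← zpow_mul_binomZ, ← h9]; push_cast; ring

theorem coeff_X_pow_mul_pow (n t : ℕ) :
    coeff n (X ^ t * (1 + C 3 * X + C 2 * X ^ 2 : ℚ⟦X⟧) ^ (t + 1)) =
      ∑ l ∈ Finset.range (t + 1), (t.choose l : ℚ) * 2 ^ (t - l) *
        ((3 : ℚ) ^ ((n : ℤ) + 2 * l - 3 * t - 2) *
          (2 * binomZ l ((n : ℤ) + 2 * l - 3 * t - 2) +
            9 * binomZ ((l : ℤ) + 1) ((n : ℤ) + 2 * l - 3 * t))) := by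
  have hexp : X ^ t * (1 + C 3 * X + C 2 * X ^ 2 : ℚ⟦X⟧) ^ (t + 1) =
      ∑ l ∈ Finset.range (t + 1), C ((t.choose l : ℚ) * 2 ^ (t - l)) *
        (X ^ (t + 2 * (t - l)) * ((1 + C 3 * X) ^ l * (1 + C 3 * X + C 2 * X ^ 2))) := by
    rw [pow_succ, add_pow, Finset.sum_mul, Finset.mul_sum]
    refine Finset.sum_congr rfl fun l _ => ?_
    simp only [map_mul, map_pow, map_natCast]
    ring
  rw [hexp, map_sum]
  refine Finset.sum_congr rfl fun l hl => ?_
  rw [coeff_C_mul, coeff_X_pow_mul', ← coeff_one_add_three_X_pow_mul]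
  rw [Finset.mem_range] at hl
  congr 1
  split_ifs <;> first | rfl | omega | (congr 2; omega)

theorem coeff_mul_geom_sum (lam : ℚ) (n N : ℕ) :
    coeff n ((1 + C 3 * X + C 2 * X ^ 2) *
        ∑ t ∈ Finset.range N, (-(X * (C lam * (1 + C 3 * X + C 2 * X ^ 2)))) ^ t) =
      ∑ t ∈ Finset.range N, (-lam) ^ t * coeff n (X ^ t * (1 + C 3 * X + C 2 * X ^ 2) ^ (t + 1)) := by
  rw [Finset.mul_sum, map_sum]
  refine Finset.sum_congr rfl fun t _ => ?_
  rw [← coeff_C_mul, map_pow, map_neg, neg_pow, mul_pow, mul_pow]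
  congr 1
  ring

/-- Let `c n = c_n(λ)` satisfy `c_0(λ) = 1` and
`c_n(λ) = (3 - λ) c_{n-1}(λ) - ∑_{i=2}^{n} (-1)^i (2^{i+1} - 1) c_{n-i}(λ)`.
Then `c_n(λ) = ∑_{t=0}^{n} (∑_{ℓ=0}^{t} C(t,ℓ) (-1)^t 2^{t-ℓ} 3^{n+2ℓ-3t-2}
[2 C(ℓ, n+2ℓ-3t-2) + 9 C(ℓ+1, n+2ℓ-3t)]) λ^t`. -/
theorem stmt5 (lam : ℚ) (c : ℕ → ℚ) (h0 : c 0 = 1)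
    (hrec : ∀ n, 1 ≤ n →
      c n = (3 - lam) * c (n - 1) -
        ∑ i ∈ Finset.Icc 2 n, (-1 : ℚ) ^ i * (2 ^ (i + 1) - 1) * c (n - i)) :
    ∀ n, c n = ∑ t ∈ Finset.range (n + 1),
      (∑ l ∈ Finset.range (t + 1),
        (Nat.choose t l : ℚ) * (-1) ^ t * 2 ^ (t - l) *
          (3 : ℚ) ^ ((n : ℤ) + 2 * l - 3 * t - 2) *
          (2 * binomZ (l : ℤ) ((n : ℤ) + 2 * l - 3 * t - 2) +
            9 * binomZ ((l : ℤ) + 1) ((n : ℤ) + 2 * l - 3 * t))) * lam ^ t := by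
  intro n
  rw [← coeff_mk n c, coeff_eq_coeff_mul_geom_sum_of_mul_one_add_X_mul_eq
    (mk_mul_one_add_X_mul_eq h0 hrec) (Nat.lt_succ_self n), coeff_mul_geom_sum]
  refine Finset.sum_congr rfl fun t _ => ?_
  rw [coeff_X_pow_mul_pow, Finset.mul_sum, Finset.sum_mul]
  refine Finset.sum_congr rfl fun l _ => ?_
  ring
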